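/- Let X be a finite-dimensional Banach space with numerical radius a norm on L(X), V an n-dimensional subspace of L(X)_w, and T ∈ L(X)_w. If there exist t₁,…,t_h > 0 with Σ tᵢ = 1, extreme points xᵢ* of B_{X*} and xᵢ of B_X with |xᵢ*(xᵢ)| = 1, xᵢ*(T xᵢ) = w(T) for each i, and Σᵢ tᵢ xᵢ*(S xᵢ) = 0 for all S ∈ V, then T is Birkhoff–James orthogonal to V in the numerical radius norm, i.e., w(T + λS) ≥ w(T) for all scalars λ and all S ∈ V. -/

import Mathlib

variable {𝕜 : Type*} [RCLike 𝕜] {X : Type*} [NormedAddCommGroup X] [NormedSpace 𝕜 X]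

/-- The numerical radius of a bounded linear operator on a Banach space. -/
noncomputable def nrad (T : X →L[𝕜] X) : ℝ :=
  sSup {r : ℝ | ∃ (x : X) (f : X →L[𝕜] 𝕜), ‖x‖ = 1 ∧ ‖f‖ = 1 ∧ f x = 1 ∧ r = ‖f (T x)‖}

/-- The functional `x* ⊗ x : T ↦ x*(Tx)` on `L(X)`. -/
noncomputable def tensor (f : X →L[𝕜] 𝕜) (x : X) : (X →L[𝕜] X) →L[𝕜] 𝕜 :=
  f.comp (ContinuousLinearMap.apply 𝕜 X x)

/-- The dual norm induced on functionals by the numerical radius norm. -/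
noncomputable def wdual (g : (X →L[𝕜] X) →L[𝕜] 𝕜) : ℝ :=
  sSup {r : ℝ | ∃ T : X →L[𝕜] X, nrad T ≤ 1 ∧ r = ‖g T‖}

/-! The argument: each `xᵢ*(A xᵢ)` is a numerical-range value of `A`, so the convex combination
`Σ tᵢ xᵢ*(A xᵢ)` has modulus at most `w(A)`. For `A = T + λS` this combination equals `w(T)`,
since `Σ tᵢ xᵢ*(T xᵢ) = w(T)` and `Σ tᵢ xᵢ*(S xᵢ) = 0`. -/

lemma nrad_nonneg (A : X →L[𝕜] X) : 0 ≤ nrad A :=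
  Real.sSup_nonneg fun _ ⟨_, _, _, _, _, hr⟩ ↦ hr ▸ norm_nonneg _

lemma bddAbove_nrad (A : X →L[𝕜] X) :
    BddAbove {r : ℝ | ∃ (x : X) (f : X →L[𝕜] 𝕜), ‖x‖ = 1 ∧ ‖f‖ = 1 ∧ f x = 1 ∧
      r = ‖f (A x)‖} := by
  refine ⟨‖A‖, ?_⟩
  rintro r ⟨x, f, hx, hf, -, rfl⟩
  calc ‖f (A x)‖ ≤ ‖f‖ * (‖A‖ * ‖x‖) := (f.le_opNorm _).trans (by gcongr; exact A.le_opNorm x)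
    _ = ‖A‖ := by rw [hf, hx, one_mul, mul_one]

/-- A unimodular value `f x` can be rotated to `1`, so `‖f (A x)‖` is a numerical-range value. -/
lemma norm_apply_le_nrad (A : X →L[𝕜] X) {f : X →L[𝕜] 𝕜} {x : X}
    (hf : ‖f‖ = 1) (hx : ‖x‖ = 1) (hfx : ‖f x‖ = 1) :
    ‖f (A x)‖ ≤ nrad A := by
  have hfx₀ : f x ≠ 0 := norm_ne_zero_iff.mp (by rw [hfx]; exact one_ne_zero)
  refine le_csSup (bddAbove_nrad A) ⟨x, (f x)⁻¹ • f, hx, ?_, ?_, ?_⟩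
  · rw [norm_smul, norm_inv, hfx, hf, inv_one, one_mul]
  · simp [inv_mul_cancel₀ hfx₀]
  · simp [norm_inv, hfx]

lemma norm_eq_one_of_norm_apply_eq_one {f : X →L[𝕜] 𝕜} {x : X}
    (hf : ‖f‖ ≤ 1) (hx : ‖x‖ ≤ 1) (hfx : ‖f x‖ = 1) : ‖f‖ = 1 ∧ ‖x‖ = 1 := by
  have h : 1 ≤ ‖f‖ * ‖x‖ := hfx ▸ f.le_opNorm x
  constructor <;> nlinarith [norm_nonneg f, norm_nonneg x]

lemma norm_sum_mul_apply_le_nrad {ι : Type*} (s : Finset ι) (A : X →L[𝕜] X)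
    {t : ι → ℝ} (ht : ∀ i, 0 ≤ t i) (hts : ∑ i ∈ s, t i = 1)
    {f : ι → X →L[𝕜] 𝕜} {x : ι → X} (hf : ∀ i, ‖f i‖ = 1) (hx : ∀ i, ‖x i‖ = 1)
    (hfx : ∀ i, ‖f i (x i)‖ = 1) :
    ‖∑ i ∈ s, (t i : 𝕜) * f i (A (x i))‖ ≤ nrad A :=
  calc ‖∑ i ∈ s, (t i : 𝕜) * f i (A (x i))‖
      ≤ ∑ i ∈ s, t i * ‖f i (A (x i))‖ := by
        refine (norm_sum_le _ _).trans_eq (Finset.sum_congr rfl fun i _ ↦ ?_)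
        rw [norm_mul, RCLike.norm_ofReal, abs_of_nonneg (ht i)]
    _ ≤ ∑ i ∈ s, t i * nrad A :=
        Finset.sum_le_sum fun i _ ↦
          mul_le_mul_of_nonneg_left (norm_apply_le_nrad A (hf i) (hx i) (hfx i)) (ht i)
    _ = nrad A := by rw [← Finset.sum_mul, hts, one_mul]

theorem stmt_8_general {X : Type*} [NormedAddCommGroup X] [NormedSpace 𝕜 X]
    [NormedSpace ℝ X]
    (V : Submodule 𝕜 (X →L[𝕜] X))
    (T : X →L[𝕜] X) (h : ℕ)
    (t : Fin h → ℝ) (ht : ∀ i, 0 < t i) (hts : ∑ i, t i = 1)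
    (f : Fin h → (X →L[𝕜] 𝕜)) (x : Fin h → X)
    (hf : ∀ i, f i ∈ Set.extremePoints ℝ (Metric.closedBall (0 : X →L[𝕜] 𝕜) 1))
    (hx : ∀ i, x i ∈ Set.extremePoints ℝ (Metric.closedBall (0 : X) 1))
    (hfx : ∀ i, ‖f i (x i)‖ = 1)
    (hfT : ∀ i, f i (T (x i)) = (nrad T : 𝕜))
    (hS : ∀ S ∈ V, ∑ i, (t i : 𝕜) * f i (S (x i)) = 0) :
    ∀ S ∈ V, ∀ c : 𝕜, nrad T ≤ nrad (T + c • S) := by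
  intro S hSV c
  have hnorm i : ‖f i‖ = 1 ∧ ‖x i‖ = 1 :=
    norm_eq_one_of_norm_apply_eq_one (mem_closedBall_zero_iff.mp (hf i).1)
      (mem_closedBall_zero_iff.mp (hx i).1) (hfx i)
  have hsum : ∑ i, (t i : 𝕜) * f i ((T + c • S) (x i)) = nrad T := by
    calc ∑ i, (t i : 𝕜) * f i ((T + c • S) (x i))
        = ∑ i, (t i : 𝕜) * nrad T + c * ∑ i, (t i : 𝕜) * f i (S (x i)) := by
          simp only [add_apply, smul_apply, map_add,
            map_smul, smul_eq_mul, hfT, Finset.mul_sum, ← Finset.sum_add_distrib]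
          exact Finset.sum_congr rfl fun i _ ↦ by ring
      _ = nrad T := by rw [hS S hSV, ← Finset.sum_mul, ← RCLike.ofReal_sum, hts]; simp
  calc nrad T = ‖(nrad T : 𝕜)‖ := by rw [RCLike.norm_ofReal, abs_of_nonneg (nrad_nonneg T)]
    _ ≤ nrad (T + c • S) := hsum ▸ norm_sum_mul_apply_le_nrad _ _ (fun i ↦ (ht i).le) hts
        (fun i ↦ (hnorm i).1) (fun i ↦ (hnorm i).2) hfx

/-- Sufficient condition for Birkhoff–James orthogonality `T ⊥_w V` in the numerical radius
norm, in terms of extreme points of the unit balls of `X` and `X*`. -/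
theorem stmt_8 {X : Type*} [NormedAddCommGroup X] [NormedSpace 𝕜 X]
    [NormedSpace ℝ X] [IsScalarTower ℝ 𝕜 X] [FiniteDimensional 𝕜 X]
    (hw : ∀ T : X →L[𝕜] X, nrad T = 0 → T = 0)
    (n : ℕ) (V : Submodule 𝕜 (X →L[𝕜] X)) (hV : Module.finrank 𝕜 V = n)
    (T : X →L[𝕜] X) (h : ℕ) (hh : 0 < h)
    (t : Fin h → ℝ) (ht : ∀ i, 0 < t i) (hts : ∑ i, t i = 1)
    (f : Fin h → (X →L[𝕜] 𝕜)) (x : Fin h → X)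
    (hf : ∀ i, f i ∈ Set.extremePoints ℝ (Metric.closedBall (0 : X →L[𝕜] 𝕜) 1))
    (hx : ∀ i, x i ∈ Set.extremePoints ℝ (Metric.closedBall (0 : X) 1))
    (hfx : ∀ i, ‖f i (x i)‖ = 1)
    (hfT : ∀ i, f i (T (x i)) = (nrad T : 𝕜))
    (hS : ∀ S ∈ V, ∑ i, (t i : 𝕜) * f i (S (x i)) = 0) :
    ∀ S ∈ V, ∀ c : 𝕜, nrad T ≤ nrad (T + c • S) :=
  stmt_8_general V T h t ht hts f x hf hx hfx hfT hS
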